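/- In A(p) every invertible element has a logarithm: e^{A(p)} = A(p)^{-1}. That is, g ∈ A(p) is invertible with respect to ∗ if and only if there exists f ∈ A(p) with e^f = g, where e^f := ∑_{n=0}^∞ f^{∗n}/n! is the exponential in the Banach algebra A(p). -/

import Mathlib

open scoped BigOperators

/-- A weight: a sequence of positive reals. -/
structure GoodWeight : Type where
  p : ℕ → ℝ
  pos : ∀ n, 0 < p n

namespace GoodWeight

/-- The growth condition `lim_{n→∞} p(n)^(1/n) = ∞`. -/
def Grows (w : GoodWeight) : Prop :=
  Filter.Tendsto (fun n : ℕ => w.p n ^ ((n : ℝ)⁻¹)) Filter.atTop Filter.atTop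

/-- The Banach algebra `A(p)`, in its sequence model: a sequence `a : ℕ → ℂ` (the
Taylor coefficients at `0` of the corresponding entire function) such that
`sup_n p(n)|a(n)| < ∞`. -/
def Ap (w : GoodWeight) : Type :=
  {a : ℕ → ℂ // ∃ C : ℝ, ∀ n, w.p n * ‖a n‖ ≤ C}

namespace Ap

variable {w : GoodWeight}

instance : Zero w.Ap :=
  ⟨⟨fun _ => 0, 0, fun n => by simp⟩⟩

instance : Add w.Ap :=
  ⟨fun a b =>
    ⟨fun n => a.1 n + b.1 n, by
      obtain ⟨C, hC⟩ := a.2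
      obtain ⟨D, hD⟩ := b.2
      refine ⟨C + D, fun n => ?_⟩
      have h1 : ‖a.1 n + b.1 n‖ ≤ ‖a.1 n‖ + ‖b.1 n‖ :=
        norm_add_le _ _
      calc w.p n * ‖a.1 n + b.1 n‖
          ≤ w.p n * ‖a.1 n‖ + w.p n * ‖b.1 n‖ := by
            rw [← mul_add]; exact mul_le_mul_of_nonneg_left h1 (w.pos n).le
        _ ≤ C + D := add_le_add (hC n) (hD n)⟩⟩

instance : Neg w.Ap :=
  ⟨fun a =>
    ⟨fun n => -a.1 n, by
      obtain ⟨C, hC⟩ := a.2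
      exact ⟨C, fun n => by simpa using hC n⟩⟩⟩

/-- The weighted Hadamard multiplication `(f ∗ g)(n) = p(n) f̂(n) ĝ(n)`. -/
instance : Mul w.Ap :=
  ⟨fun a b =>
    ⟨fun n => (w.p n : ℂ) * a.1 n * b.1 n, by
      obtain ⟨C, hC⟩ := a.2
      obtain ⟨D, hD⟩ := b.2
      refine ⟨C * D, fun n => ?_⟩
      have e : w.p n * ‖(w.p n : ℂ) * a.1 n * b.1 n‖
          = (w.p n * ‖a.1 n‖) * (w.p n * ‖b.1 n‖) := by
        rw [norm_mul, norm_mul, Complex.norm_real, Real.norm_eq_abs, abs_of_pos (w.pos n)]; ring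
      rw [e]
      have h0C : (0:ℝ) ≤ C :=
        le_trans (mul_nonneg (w.pos 0).le (norm_nonneg _)) (hC 0)
      exact mul_le_mul (hC n) (hD n) (mul_nonneg (w.pos n).le (norm_nonneg _)) h0C⟩⟩

/-- The identity element `ε`, with coefficients `1/p(n)`. -/
noncomputable instance : One w.Ap :=
  ⟨⟨fun n => ((w.p n : ℂ))⁻¹, 1, fun n => by
      rw [norm_inv, Complex.norm_real, Real.norm_eq_abs, abs_of_pos (w.pos n),
        mul_inv_cancel₀ (w.pos n).ne']⟩⟩

instance : SMul ℂ w.Ap :=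
  ⟨fun c a =>
    ⟨fun n => c * a.1 n, by
      obtain ⟨C, hC⟩ := a.2
      refine ⟨‖c‖ * C, fun n => ?_⟩
      rw [norm_mul]
      calc w.p n * (‖c‖ * ‖a.1 n‖)
          = ‖c‖ * (w.p n * ‖a.1 n‖) := by ring
        _ ≤ ‖c‖ * C := mul_le_mul_of_nonneg_left (hC n) (norm_nonneg c)⟩⟩

noncomputable instance : CommRing w.Ap where
  add := (· + ·)
  add_assoc a b c := Subtype.ext (funext fun n => add_assoc _ _ _)
  zero := 0
  zero_add a := Subtype.ext (funext fun n => zero_add _)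
  add_zero a := Subtype.ext (funext fun n => add_zero _)
  add_comm a b := Subtype.ext (funext fun n => add_comm _ _)
  nsmul := nsmulRec
  zsmul := zsmulRec
  mul := (· * ·)
  mul_assoc a b c := Subtype.ext (funext fun n => by
    show (w.p n : ℂ) * ((w.p n : ℂ) * a.1 n * b.1 n) * c.1 n
        = (w.p n : ℂ) * a.1 n * ((w.p n : ℂ) * b.1 n * c.1 n)
    ring)
  one := 1
  one_mul a := Subtype.ext (funext fun n => by
    show (w.p n : ℂ) * ((w.p n : ℂ))⁻¹ * a.1 n = a.1 n
    have h : ((w.p n : ℝ) : ℂ) ≠ 0 := by exact_mod_cast (w.pos n).ne'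
    rw [mul_inv_cancel₀ h, one_mul])
  mul_one a := Subtype.ext (funext fun n => by
    show (w.p n : ℂ) * a.1 n * ((w.p n : ℂ))⁻¹ = a.1 n
    have h : ((w.p n : ℝ) : ℂ) ≠ 0 := by exact_mod_cast (w.pos n).ne'
    field_simp)
  left_distrib a b c := Subtype.ext (funext fun n => by
    show (w.p n : ℂ) * a.1 n * (b.1 n + c.1 n)
        = (w.p n : ℂ) * a.1 n * b.1 n + (w.p n : ℂ) * a.1 n * c.1 n
    ring)
  right_distrib a b c := Subtype.ext (funext fun n => by
    show (w.p n : ℂ) * (a.1 n + b.1 n) * c.1 n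
        = (w.p n : ℂ) * a.1 n * c.1 n + (w.p n : ℂ) * b.1 n * c.1 n
    ring)
  zero_mul a := Subtype.ext (funext fun n => by
    show (w.p n : ℂ) * 0 * a.1 n = 0
    ring)
  mul_zero a := Subtype.ext (funext fun n => by
    show (w.p n : ℂ) * a.1 n * 0 = 0
    ring)
  mul_comm a b := Subtype.ext (funext fun n => by
    show (w.p n : ℂ) * a.1 n * b.1 n = (w.p n : ℂ) * b.1 n * a.1 n
    ring)
  neg := Neg.neg
  neg_add_cancel a := Subtype.ext (funext fun n => neg_add_cancel _)

instance : Module ℂ w.Ap where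
  smul := (· • ·)
  one_smul a := Subtype.ext (funext fun n => by
    show (1 : ℂ) * a.1 n = a.1 n
    ring)
  mul_smul c d a := Subtype.ext (funext fun n => by
    show (c * d) * a.1 n = c * (d * a.1 n)
    ring)
  smul_zero c := Subtype.ext (funext fun n => by
    show c * 0 = 0
    ring)
  smul_add c a b := Subtype.ext (funext fun n => by
    show c * (a.1 n + b.1 n) = c * a.1 n + c * b.1 n
    ring)
  add_smul c d a := Subtype.ext (funext fun n => by
    show (c + d) * a.1 n = c * a.1 n + d * a.1 n
    ring)
  zero_smul a := Subtype.ext (funext fun n => by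
    show (0 : ℂ) * a.1 n = 0
    ring)

noncomputable instance : Algebra ℂ w.Ap :=
  Algebra.ofModule
    (fun c a b => Subtype.ext (funext fun n => by
      show (w.p n : ℂ) * (c * a.1 n) * b.1 n = c * ((w.p n : ℂ) * a.1 n * b.1 n)
      ring))
    (fun c a b => Subtype.ext (funext fun n => by
      show (w.p n : ℂ) * a.1 n * (c * b.1 n) = c * ((w.p n : ℂ) * a.1 n * b.1 n)
      ring))

theorem bddAbove (a : w.Ap) :
    BddAbove (Set.range fun n => w.p n * ‖a.1 n‖) := by
  obtain ⟨C, hC⟩ := a.2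
  exact ⟨C, by rintro x ⟨k, rfl⟩; exact hC k⟩

/-- The norm `‖f‖ = sup_n p(n) |f̂(n)|`, as an `AddGroupNorm`. -/
noncomputable def gnorm (w : GoodWeight) : AddGroupNorm w.Ap where
  toFun a := ⨆ n, w.p n * ‖a.1 n‖
  map_zero' := by
    have h : ∀ n : ℕ, w.p n * ‖(0 : w.Ap).1 n‖ = 0 := fun n => by
      show w.p n * ‖(0:ℂ)‖ = 0; simp
    simp [h]
  add_le' a b := by
    apply ciSup_le
    intro n
    have h1 : ‖a.1 n + b.1 n‖ ≤ ‖a.1 n‖ + ‖b.1 n‖ :=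
      norm_add_le _ _
    calc w.p n * ‖(a + b).1 n‖
        ≤ w.p n * ‖a.1 n‖ + w.p n * ‖b.1 n‖ := by
          rw [← mul_add]; exact mul_le_mul_of_nonneg_left h1 (w.pos n).le
      _ ≤ (⨆ k, w.p k * ‖a.1 k‖) + ⨆ k, w.p k * ‖b.1 k‖ :=
          add_le_add (le_ciSup (bddAbove a) n) (le_ciSup (bddAbove b) n)
  neg' a := by
    have h : (fun n => w.p n * ‖(-a).1 n‖)
        = fun n => w.p n * ‖a.1 n‖ := by
      funext n
      show w.p n * ‖-a.1 n‖ = w.p n * ‖a.1 n‖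
      rw [norm_neg]
    show (⨆ n, w.p n * ‖(-a).1 n‖) = ⨆ n, w.p n * ‖a.1 n‖
    rw [h]
  eq_zero_of_map_eq_zero' a h := by
    apply Subtype.ext
    funext n
    have h1 : w.p n * ‖a.1 n‖ ≤ 0 := h ▸ le_ciSup (bddAbove a) n
    have h2 : (0:ℝ) ≤ w.p n * ‖a.1 n‖ :=
      mul_nonneg (w.pos n).le (norm_nonneg _)
    have h3 : ‖a.1 n‖ = 0 := by
      rcases mul_eq_zero.mp (le_antisymm h1 h2) with h' | h'
      · exact absurd h' (w.pos n).ne'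
      · exact h'
    exact norm_eq_zero.mp h3

noncomputable instance : NormedAddCommGroup w.Ap :=
  (gnorm w).toNormedAddCommGroup

theorem norm_def (a : w.Ap) : ‖a‖ = ⨆ n, w.p n * ‖a.1 n‖ := rfl

theorem le_norm (a : w.Ap) (n : ℕ) : w.p n * ‖a.1 n‖ ≤ ‖a‖ :=
  le_ciSup (bddAbove a) n

theorem norm_nonneg' (a : w.Ap) : 0 ≤ ‖a‖ :=
  le_trans (mul_nonneg (w.pos 0).le (norm_nonneg _)) (le_norm a 0)

noncomputable instance : NormedCommRing w.Ap :=
  { (inferInstance : NormedAddCommGroup w.Ap), (inferInstance : CommRing w.Ap) with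
    norm_mul_le := by
      intro a b
      apply ciSup_le
      intro n
      have e : w.p n * ‖(a * b).1 n‖
          = (w.p n * ‖a.1 n‖) * (w.p n * ‖b.1 n‖) := by
        show w.p n * ‖(w.p n : ℂ) * a.1 n * b.1 n‖ = _
        rw [norm_mul, norm_mul, Complex.norm_real, Real.norm_eq_abs, abs_of_pos (w.pos n)]; ring
      rw [e]
      exact mul_le_mul (le_norm a n) (le_norm b n)
        (mul_nonneg (w.pos n).le (norm_nonneg _)) (norm_nonneg' a) }

noncomputable instance : NormedSpace ℂ w.Ap where
  norm_smul_le c a := by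
    apply ciSup_le
    intro n
    have e : w.p n * ‖(c • a).1 n‖
        = ‖c‖ * (w.p n * ‖a.1 n‖) := by
      show w.p n * ‖c * a.1 n‖ = _
      rw [norm_mul]; ring
    rw [e]
    calc ‖c‖ * (w.p n * ‖a.1 n‖)
        ≤ ‖c‖ * ‖a‖ := mul_le_mul_of_nonneg_left (le_norm a n) (norm_nonneg c)
      _ = ‖c‖ * ‖a‖ := rfl

noncomputable instance : NormedAlgebra ℂ w.Ap :=
  { (inferInstance : Algebra ℂ w.Ap) with
    norm_smul_le := fun c a => norm_smul_le c a }

end Ap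

end GoodWeight

/-!
The maps `a ↦ p(m) a(m)` are continuous characters of `A(p)` which together identify it
isometrically with `ℓ^∞(ℕ, ℂ)`; in particular `A(p)` is complete. Characters commute with the
exponential, so `e^f` has weighted coefficients `exp (p(m) f(m))`. If `g` is invertible, its
weighted coefficients lie between `1 / ‖g⁻¹‖` and `‖g‖` in modulus, so their principal logarithms
are bounded and are the weighted coefficients of some `f` with `e^f = g`.
-/

theorem Complex.norm_log_le (z : ℂ) (hz : z ≠ 0) : ‖log z‖ ≤ ‖z‖ + ‖z‖⁻¹ + Real.pi := by
  have hpos : 0 < ‖z‖ := norm_pos_iff.2 hz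
  have hre : |(log z).re| ≤ ‖z‖ + ‖z‖⁻¹ := by
    rw [log_re, abs_le]
    constructor
    · have := Real.log_le_sub_one_of_pos (inv_pos.2 hpos)
      rw [Real.log_inv] at this
      linarith
    · linarith [Real.log_le_sub_one_of_pos hpos, inv_pos.2 hpos]
  calc ‖log z‖ ≤ |(log z).re| + |(log z).im| := norm_le_abs_re_add_abs_im _
    _ ≤ ‖z‖ + ‖z‖⁻¹ + Real.pi := add_le_add hre (by rw [log_im]; exact abs_arg_le_pi z)

open scoped ENNReal

namespace GoodWeight.Ap

variable {w : GoodWeight}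

theorem coe_p_ne_zero (w : GoodWeight) (m : ℕ) : (w.p m : ℂ) ≠ 0 :=
  Complex.ofReal_ne_zero.2 (w.pos m).ne'

/-- Weighting by `p m` turns the `m`-th coefficient into a character of `A(p)`. -/
noncomputable def eval (m : ℕ) : w.Ap →ₐ[ℂ] ℂ where
  toFun a := w.p m * a.1 m
  map_one' := mul_inv_cancel₀ (coe_p_ne_zero w m)
  map_mul' a b := by
    show (w.p m : ℂ) * ((w.p m : ℂ) * a.1 m * b.1 m) = _
    ring
  map_zero' := mul_zero _
  map_add' a b := mul_add _ (a.1 m) (b.1 m)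
  commutes' c := by
    show (w.p m : ℂ) * (c * ((w.p m : ℂ))⁻¹) = c
    field_simp [coe_p_ne_zero w m]

theorem eval_apply (m : ℕ) (a : w.Ap) : eval m a = w.p m * a.1 m := rfl

theorem norm_eval (m : ℕ) (a : w.Ap) : ‖eval m a‖ = w.p m * ‖a.1 m‖ := by
  rw [eval_apply, norm_mul, Complex.norm_real, Real.norm_of_nonneg (w.pos m).le]

theorem norm_eval_le (m : ℕ) (a : w.Ap) : ‖eval m a‖ ≤ ‖a‖ :=
  (norm_eval m a).trans_le (le_norm a m)

theorem continuous_eval (m : ℕ) : Continuous (eval (w := w) m) :=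
  AddMonoidHomClass.continuous_of_bound (eval m) 1 fun a => by
    simpa using norm_eval_le m a

theorem ext_eval {a b : w.Ap} (h : ∀ m, eval m a = eval m b) : a = b :=
  Subtype.ext <| funext fun m => mul_left_cancel₀ (coe_p_ne_zero w m) (h m)

noncomputable def ofBounded (u : ℕ → ℂ) {C : ℝ} (hu : ∀ m, ‖u m‖ ≤ C) : w.Ap :=
  ⟨fun m => u m / w.p m, C, fun m => by
    rw [norm_div, Complex.norm_real, Real.norm_of_nonneg (w.pos m).le,
      mul_div_cancel₀ _ (w.pos m).ne']
    exact hu m⟩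

theorem eval_ofBounded (u : ℕ → ℂ) {C : ℝ} (hu : ∀ m, ‖u m‖ ≤ C) (m : ℕ) :
    eval m (ofBounded (w := w) u hu) = u m :=
  mul_div_cancel₀ _ (coe_p_ne_zero w m)

noncomputable def toLp (w : GoodWeight) : w.Ap →+ lp (fun _ : ℕ => ℂ) ∞ where
  toFun a := ⟨fun m => eval m a, memℓp_infty ⟨‖a‖, by
    rintro _ ⟨m, rfl⟩; exact norm_eval_le m a⟩⟩
  map_zero' := by ext m; exact map_zero (eval m)
  map_add' a b := by ext m; exact map_add (eval m) a b

theorem norm_toLp (a : w.Ap) : ‖toLp w a‖ = ‖a‖ := by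
  rw [lp.norm_eq_ciSup, norm_def]
  exact congrArg iSup (funext fun m => norm_eval m a)

theorem toLp_surjective : Function.Surjective (toLp w) := fun u =>
  ⟨ofBounded u (lp.norm_apply_le_norm ENNReal.top_ne_zero u), by
    ext m; exact eval_ofBounded _ _ m⟩

instance : CompleteSpace w.Ap := by
  have hiso := AddMonoidHomClass.isometry_of_norm (toLp w) norm_toLp
  rw [completeSpace_iff_isComplete_range hiso.isUniformInducing, toLp_surjective.range_eq]
  exact isComplete_univ

theorem mem_eball_expSeries_radius (f : w.Ap) :
    f ∈ Metric.eball 0 (NormedSpace.expSeries ℂ w.Ap).radius :=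
  (NormedSpace.expSeries_radius_eq_top ℂ w.Ap).symm ▸ edist_lt_top _ _

theorem eval_exp (m : ℕ) (f : w.Ap) : eval m (NormedSpace.exp f) = Complex.exp (eval m f) := by
  rw [Complex.exp_eq_exp_ℂ]
  exact NormedSpace.map_exp_of_mem_ball (eval m) (continuous_eval m) f
    (mem_eball_expSeries_radius f)

theorem eval_units_ne_zero (u : w.Apˣ) (m : ℕ) : eval m (u : w.Ap) ≠ 0 :=
  (u.isUnit.map (eval m)).ne_zero

theorem norm_log_eval_le (u : w.Apˣ) (m : ℕ) :
    ‖Complex.log (eval m (u : w.Ap))‖ ≤ ‖(u : w.Ap)‖ + ‖(↑u⁻¹ : w.Ap)‖ + Real.pi := by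
  have hinv : ‖eval m (u : w.Ap)‖⁻¹ ≤ ‖(↑u⁻¹ : w.Ap)‖ := by
    rw [← norm_inv, ← map_units_inv]
    exact norm_eval_le m _
  linarith [Complex.norm_log_le _ (eval_units_ne_zero u m), norm_eval_le m (u : w.Ap)]

end GoodWeight.Ap

theorem exp_eq_units_general (w : GoodWeight) (g : w.Ap) :
    IsUnit g ↔ ∃ f : w.Ap, (∑' n : ℕ, (n.factorial : ℂ)⁻¹ • f ^ n) = g := by
  open GoodWeight.Ap in
  simp_rw [← congrFun (NormedSpace.exp_eq_tsum ℂ)]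
  constructor
  · rintro ⟨u, rfl⟩
    refine ⟨ofBounded (fun m => Complex.log (eval m (u : w.Ap))) (norm_log_eval_le u),
      ext_eval fun m => ?_⟩
    rw [eval_exp, eval_ofBounded, Complex.exp_log (eval_units_ne_zero u m)]
  · rintro ⟨f, rfl⟩
    exact NormedSpace.isUnit_exp_of_mem_ball (mem_eball_expSeries_radius f)

/-- `e^{A(p)} = A(p)⁻¹`: an element of `A(p)` is invertible iff it is the
exponential `e^f = ∑ f^{∗n}/n!` of some `f ∈ A(p)`. -/
theorem exp_eq_units (w : GoodWeight) (hg : w.Grows) (g : w.Ap) :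
    IsUnit g ↔ ∃ f : w.Ap, (∑' n : ℕ, (n.factorial : ℂ)⁻¹ • f ^ n) = g :=
  exp_eq_units_general w g
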